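/- The q-Stirling numbers of the second kind satisfy the generating function identity: for every nonnegative integer k, Σ_{n≥k} S₂^q(n, k) z^n = z^k / ∏_{i=1}^{k} (1 − [i]_q z), as formal power series in z over ℚ(q). -/

import Mathlib

/-- The q-integer [m]_q = 1 + q + ⋯ + q^(m-1), as an element of ℚ(q). -/
noncomputable def qnat (m : ℕ) : RatFunc ℚ := ∑ i ∈ Finset.range m, (RatFunc.X : RatFunc ℚ) ^ i

/-- q-Stirling numbers of the second kind:
    S₂^q(n, k) = S₂^q(n-1, k-1) + [k]_q · S₂^q(n-1, k), S₂^q(0, k) = δ₀ₖ. -/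
noncomputable def S2q : ℕ → ℕ → RatFunc ℚ
  | 0, 0 => 1
  | 0, _ + 1 => 0
  | n + 1, 0 => 0
  | n + 1, k + 1 => S2q n k + qnat (k + 1) * S2q n (k + 1)

open PowerSeries in
lemma key (k : ℕ) :
    (1 - PowerSeries.C (qnat (k + 1)) * X) * (PowerSeries.mk fun n => S2q n (k + 1))
      = X * (PowerSeries.mk fun n => S2q n k) := by
  ext n
  cases n with
  | zero => simp [S2q]
  | succ m =>
    simp only [sub_mul, one_mul, map_sub, coeff_mk, mul_assoc,
      PowerSeries.coeff_succ_X_mul, PowerSeries.coeff_C_mul, coeff_mk]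
    simp [S2q]

open PowerSeries in
theorem stmt_12 (k : ℕ) :
    (PowerSeries.mk fun n => S2q n k) =
      (X : PowerSeries (RatFunc ℚ)) ^ k *
        (∏ i ∈ Finset.range k,
          (1 - PowerSeries.C (qnat (i + 1)) * X))⁻¹ := by
  induction k with
  | zero =>
    simp only [pow_zero, Finset.range_zero, Finset.prod_empty, inv_one, mul_one]
    ext n
    cases n <;> simp [S2q]
  | succ k ih =>
    have h1 : constantCoeff
        (1 - PowerSeries.C (qnat (k + 1)) * X) ≠ 0 := by simp
    have heq : (PowerSeries.mk fun n => S2q n (k + 1)) =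
        (X * PowerSeries.mk fun n => S2q n k) *
          (1 - PowerSeries.C (qnat (k + 1)) * X)⁻¹ := by
      rw [PowerSeries.eq_mul_inv_iff_mul_eq h1, mul_comm _ (1 - _)]
      exact key k
    rw [heq, ih, Finset.prod_range_succ, PowerSeries.mul_inv_rev]
    ring
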